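/- arXiv:2005.09725 — 5 statements merged into one kernel-verified Lean document; each statement's English description precedes it below -/
import Mathlib

section
/- Equivalence of TGV² for different weights: for any two parameter pairs α = (α₀, α₁) and α̃ = (α̃₀, α̃₁) with all entries positive, and every locally integrable u : Ω → ℝ, one has min(α̃₀/α₀, α̃₁/α₁) · TGV²_α(u) ≤ TGV²_α̃(u) ≤ max(α̃₀/α₀, α̃₁/α₁) · TGV²_α(u) (inequalities in [0,∞]). In particular TGV²_α and TGV²_α̃ are equivalent functionals. -/
open MeasureTheory Filter Topology
open scoped ENNReal

noncomputable section

/-- Partial derivative `∂f/∂x_j` of a scalar function on `ℝ^d`. -/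
def pd {d : ℕ} (j : Fin d) (f : (Fin d → ℝ) → ℝ) (x : Fin d → ℝ) : ℝ :=
  fderiv ℝ f x (Pi.single j 1)

/-- Divergence of a matrix field: `(div v)_i = ∑_j ∂v_ij/∂x_j`. -/
def mdiv {d : ℕ} (v : (Fin d → ℝ) → Fin d → Fin d → ℝ) (x : Fin d → ℝ) (i : Fin d) : ℝ :=
  ∑ j, pd j (fun y => v y i j) x

/-- Second divergence `div² v = ∑_{i,j} ∂²v_ij/∂x_i∂x_j`. -/
def mdiv2 {d : ℕ} (v : (Fin d → ℝ) → Fin d → Fin d → ℝ) (x : Fin d → ℝ) : ℝ :=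
  ∑ i, ∑ j, pd i (pd j (fun y => v y i j)) x

/-- Euclidean norm of a vector in `ℝ^d`. -/
def enorm2 {d : ℕ} (w : Fin d → ℝ) : ℝ := Real.sqrt (∑ i, (w i) ^ 2)

/-- Frobenius-type norm of a symmetric matrix: `(∑_i |M_ii|² + 2 ∑_{i<j} |M_ij|²)^(1/2)`. -/
def fnorm2 {d : ℕ} (M : Fin d → Fin d → ℝ) : ℝ :=
  Real.sqrt ((∑ i, (M i i) ^ 2) + 2 * ∑ i, ∑ j, if i < j then (M i j) ^ 2 else 0)

/-- Admissible test fields for second-order TGV: `v ∈ C_c²(Ω, S^{d×d})`,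
`‖v‖_∞ ≤ α₀`, `‖div v‖_∞ ≤ α₁`. -/
def TGVtest {d : ℕ} (Ω : Set (Fin d → ℝ)) (α₀ α₁ : ℝ)
    (v : (Fin d → ℝ) → Fin d → Fin d → ℝ) : Prop :=
  ContDiff ℝ 2 v ∧ HasCompactSupport v ∧ tsupport v ⊆ Ω ∧
    (∀ x i j, v x i j = v x j i) ∧
    (∀ x ∈ Ω, fnorm2 (v x) ≤ α₀) ∧
    (∀ x ∈ Ω, enorm2 (mdiv v x) ≤ α₁)

/-- Second-order Total Generalized Variation. -/
def TGV2 {d : ℕ} (Ω : Set (Fin d → ℝ)) (α₀ α₁ : ℝ) (u : (Fin d → ℝ) → ℝ) : ℝ≥0∞ :=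
  ⨆ (v) (_ : TGVtest Ω α₀ α₁ v), ENNReal.ofReal (∫ x in Ω, u x * mdiv2 v x)

/-- Admissible test fields for the total variation: `φ ∈ C_c¹(Ω, ℝ^d)`, `‖φ‖_∞ ≤ 1`. -/
def TVtest {d : ℕ} (Ω : Set (Fin d → ℝ)) (φ : (Fin d → ℝ) → Fin d → ℝ) : Prop :=
  ContDiff ℝ 1 φ ∧ HasCompactSupport φ ∧ tsupport φ ⊆ Ω ∧ ∀ x ∈ Ω, enorm2 (φ x) ≤ 1

/-- Divergence of a vector field. -/
def vdiv {d : ℕ} (φ : (Fin d → ℝ) → Fin d → ℝ) (x : Fin d → ℝ) : ℝ :=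
  ∑ j, pd j (fun y => φ y j) x

/-- Total variation. -/
def TVar {d : ℕ} (Ω : Set (Fin d → ℝ)) (u : (Fin d → ℝ) → ℝ) : ℝ≥0∞ :=
  ⨆ (φ) (_ : TVtest Ω φ), ENNReal.ofReal (∫ x in Ω, u x * vdiv φ x)

/-- Radon norm `‖Du - w‖_M` of the distributional derivative of `u` minus `w`. -/
def MnormDuSub {d : ℕ} (Ω : Set (Fin d → ℝ)) (u : (Fin d → ℝ) → ℝ)
    (w : (Fin d → ℝ) → Fin d → ℝ) : ℝ≥0∞ :=
  ⨆ (φ) (_ : TVtest Ω φ),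
    ENNReal.ofReal (∫ x in Ω, (u x * vdiv φ x + ∑ i, w x i * φ x i))

/-- Test fields for the Radon norm of the symmetrized derivative:
`v ∈ C_c²(Ω, S^{d×d})` with `‖v‖_∞ ≤ 1`. -/
def Etest {d : ℕ} (Ω : Set (Fin d → ℝ)) (v : (Fin d → ℝ) → Fin d → Fin d → ℝ) : Prop :=
  ContDiff ℝ 2 v ∧ HasCompactSupport v ∧ tsupport v ⊆ Ω ∧
    (∀ x i j, v x i j = v x j i) ∧ (∀ x ∈ Ω, fnorm2 (v x) ≤ 1)

/-- Radon norm `‖ℰw‖_M` of the distributional symmetrized derivative of `w`. -/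
def MnormEw {d : ℕ} (Ω : Set (Fin d → ℝ)) (w : (Fin d → ℝ) → Fin d → ℝ) : ℝ≥0∞ :=
  ⨆ (v) (_ : Etest Ω v), ENNReal.ofReal (∫ x in Ω, ∑ i, w x i * mdiv v x i)

/-!
Multiplying an admissible test field by `c > 0` multiplies both of its pointwise bounds and its
second divergence by `c`, so `TGV²_{(cα₀, cα₁)} = c · TGV²_{(α₀, α₁)}`. Since `TGV²_α` is also
monotone in `α`, taking `c` to be the smaller, respectively larger, of the ratios `β₀/α₀`, `β₁/α₁`
puts `(β₀, β₁)` above `(cα₀, cα₁)`, respectively below it.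
-/

lemma pd_const_smul {d : ℕ} (j : Fin d) (c : ℝ) (f : (Fin d → ℝ) → ℝ) :
    pd j (c • f) = c • pd j f := by
  funext x
  simp [pd, fderiv_const_smul_field]

lemma mdiv_const_smul {d : ℕ} (c : ℝ) (v : (Fin d → ℝ) → Fin d → Fin d → ℝ) :
    mdiv (c • v) = c • mdiv v := by
  funext x i
  simp only [mdiv, Pi.smul_apply, smul_eq_mul, Finset.mul_sum]
  exact Finset.sum_congr rfl fun j _ => congrFun (pd_const_smul j c fun y => v y i j) x

lemma mdiv2_const_smul {d : ℕ} (c : ℝ) (v : (Fin d → ℝ) → Fin d → Fin d → ℝ) :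
    mdiv2 (c • v) = c • mdiv2 v := by
  funext x
  simp only [mdiv2, Pi.smul_apply, smul_eq_mul, Finset.mul_sum]
  refine Finset.sum_congr rfl fun i _ => Finset.sum_congr rfl fun j _ => ?_
  rw [show (fun y => c * v y i j) = c • fun y => v y i j from rfl, pd_const_smul, pd_const_smul]
  rfl

lemma enorm2_const_smul {d : ℕ} (c : ℝ) (w : Fin d → ℝ) :
    enorm2 (c • w) = |c| * enorm2 w := by
  have hsum : ∑ i, (c • w) i ^ 2 = c ^ 2 * ∑ i, w i ^ 2 := by
    simp only [Pi.smul_apply, smul_eq_mul, mul_pow, Finset.mul_sum]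
  rw [enorm2, enorm2, hsum, Real.sqrt_mul (sq_nonneg c), Real.sqrt_sq_eq_abs]

lemma fnorm2_const_smul {d : ℕ} (c : ℝ) (M : Fin d → Fin d → ℝ) :
    fnorm2 (c • M) = |c| * fnorm2 M := by
  have hdiag : ∑ i, (c • M) i i ^ 2 = c ^ 2 * ∑ i, M i i ^ 2 := by
    simp only [Pi.smul_apply, smul_eq_mul, mul_pow, Finset.mul_sum]
  have hoff : (∑ i, ∑ j, if i < j then (c • M) i j ^ 2 else 0)
      = c ^ 2 * ∑ i, ∑ j, if i < j then M i j ^ 2 else 0 := by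
    simp only [Pi.smul_apply, smul_eq_mul, mul_pow, Finset.mul_sum, mul_ite, mul_zero]
  rw [fnorm2, fnorm2, hdiag, hoff, mul_left_comm, ← mul_add,
    Real.sqrt_mul (sq_nonneg c), Real.sqrt_sq_eq_abs]

namespace TGVtest

variable {d : ℕ} {Ω : Set (Fin d → ℝ)} {α₀ α₁ : ℝ} {v : (Fin d → ℝ) → Fin d → Fin d → ℝ}

lemma mono {β₀ β₁ : ℝ} (hv : TGVtest Ω α₀ α₁ v) (h₀ : α₀ ≤ β₀) (h₁ : α₁ ≤ β₁) :
    TGVtest Ω β₀ β₁ v := by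
  obtain ⟨hsmooth, hcpt, hsupp, hsymm, hbound, hdiv⟩ := hv
  exact ⟨hsmooth, hcpt, hsupp, hsymm, fun x hx => (hbound x hx).trans h₀,
    fun x hx => (hdiv x hx).trans h₁⟩

lemma const_smul (hv : TGVtest Ω α₀ α₁ v) (c : ℝ) :
    TGVtest Ω (|c| * α₀) (|c| * α₁) (c • v) := by
  obtain ⟨hsmooth, hcpt, hsupp, hsymm, hbound, hdiv⟩ := hv
  refine ⟨hsmooth.const_smul c, hcpt.smul_left (f := fun _ => c),
    (tsupport_smul_subset_right (fun _ => c) v).trans hsupp,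
    fun x i j => by simp only [Pi.smul_apply, hsymm x i j], fun x hx => ?_, fun x hx => ?_⟩
  · rw [Pi.smul_apply, fnorm2_const_smul]
    exact mul_le_mul_of_nonneg_left (hbound x hx) (abs_nonneg c)
  · rw [mdiv_const_smul, Pi.smul_apply, enorm2_const_smul]
    exact mul_le_mul_of_nonneg_left (hdiv x hx) (abs_nonneg c)

end TGVtest

section TGV2

variable {d : ℕ} (Ω : Set (Fin d → ℝ)) (u : (Fin d → ℝ) → ℝ)

lemma TGV2_mono {α₀ α₁ β₀ β₁ : ℝ} (h₀ : α₀ ≤ β₀) (h₁ : α₁ ≤ β₁) :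
    TGV2 Ω α₀ α₁ u ≤ TGV2 Ω β₀ β₁ u :=
  iSup₂_mono' fun v hv => ⟨v, hv.mono h₀ h₁, le_rfl⟩

lemma ofReal_mul_TGV2_le {c : ℝ} (hc : 0 ≤ c) (α₀ α₁ : ℝ) :
    ENNReal.ofReal c * TGV2 Ω α₀ α₁ u ≤ TGV2 Ω (c * α₀) (c * α₁) u := by
  simp only [TGV2, ENNReal.mul_iSup]
  refine iSup₂_le fun v hv => ?_
  have hscaled : TGVtest Ω (c * α₀) (c * α₁) (c • v) := by
    simpa only [abs_of_nonneg hc] using hv.const_smul c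
  refine le_iSup₂_of_le (c • v) hscaled (le_of_eq ?_)
  rw [← ENNReal.ofReal_mul hc, ← integral_const_mul, mdiv2_const_smul]
  simp only [Pi.smul_apply, smul_eq_mul, mul_left_comm]

lemma TGV2_const_mul {c : ℝ} (hc : 0 < c) (α₀ α₁ : ℝ) :
    TGV2 Ω (c * α₀) (c * α₁) u = ENNReal.ofReal c * TGV2 Ω α₀ α₁ u := by
  refine le_antisymm ?_ (ofReal_mul_TGV2_le Ω u hc.le α₀ α₁)
  have hinv := ofReal_mul_TGV2_le Ω u (inv_nonneg.mpr hc.le) (c * α₀) (c * α₁)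
  rw [inv_mul_cancel_left₀ hc.ne', inv_mul_cancel_left₀ hc.ne'] at hinv
  calc TGV2 Ω (c * α₀) (c * α₁) u
      = ENNReal.ofReal c * (ENNReal.ofReal c⁻¹ * TGV2 Ω (c * α₀) (c * α₁) u) := by
        rw [← mul_assoc, ← ENNReal.ofReal_mul hc.le, mul_inv_cancel₀ hc.ne',
          ENNReal.ofReal_one, one_mul]
    _ ≤ ENNReal.ofReal c * TGV2 Ω α₀ α₁ u := mul_le_mul_right hinv _

end TGV2

theorem tgv2_weights_equiv_general {d : ℕ} (Ω : Set (Fin d → ℝ))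
    (α₀ α₁ β₀ β₁ : ℝ) (hα₀ : 0 < α₀) (hα₁ : 0 < α₁) (hβ₀ : 0 < β₀) (hβ₁ : 0 < β₁)
    (u : (Fin d → ℝ) → ℝ) :
    ENNReal.ofReal (min (β₀ / α₀) (β₁ / α₁)) * TGV2 Ω α₀ α₁ u ≤ TGV2 Ω β₀ β₁ u ∧
    TGV2 Ω β₀ β₁ u ≤ ENNReal.ofReal (max (β₀ / α₀) (β₁ / α₁)) * TGV2 Ω α₀ α₁ u := by
  have hratio₀ : β₀ / α₀ * α₀ = β₀ := div_mul_cancel₀ β₀ hα₀.ne'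
  have hratio₁ : β₁ / α₁ * α₁ = β₁ := div_mul_cancel₀ β₁ hα₁.ne'
  set m := min (β₀ / α₀) (β₁ / α₁)
  set M := max (β₀ / α₀) (β₁ / α₁)
  have hm : 0 ≤ m := le_min (div_pos hβ₀ hα₀).le (div_pos hβ₁ hα₁).le
  have hM : 0 < M := (div_pos hβ₀ hα₀).trans_le (le_max_left _ _)
  constructor
  · calc ENNReal.ofReal m * TGV2 Ω α₀ α₁ u ≤ TGV2 Ω (m * α₀) (m * α₁) u :=
          ofReal_mul_TGV2_le Ω u hm α₀ α₁
      _ ≤ TGV2 Ω β₀ β₁ u := TGV2_mono Ω u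
          (hratio₀ ▸ mul_le_mul_of_nonneg_right (min_le_left _ _) hα₀.le)
          (hratio₁ ▸ mul_le_mul_of_nonneg_right (min_le_right _ _) hα₁.le)
  · calc TGV2 Ω β₀ β₁ u ≤ TGV2 Ω (M * α₀) (M * α₁) u := TGV2_mono Ω u
          (hratio₀ ▸ mul_le_mul_of_nonneg_right (le_max_left _ _) hα₀.le)
          (hratio₁ ▸ mul_le_mul_of_nonneg_right (le_max_right _ _) hα₁.le)
      _ = ENNReal.ofReal M * TGV2 Ω α₀ α₁ u := TGV2_const_mul Ω u hM α₀ α₁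

/-- Equivalence of TGV² for different positive weights. -/
theorem tgv2_weights_equiv {d : ℕ} (hd : 1 ≤ d) (Ω : Set (Fin d → ℝ))
    (hΩo : IsOpen Ω) (hΩb : Bornology.IsBounded Ω)
    (α₀ α₁ β₀ β₁ : ℝ) (hα₀ : 0 < α₀) (hα₁ : 0 < α₁) (hβ₀ : 0 < β₀) (hβ₁ : 0 < β₁)
    (u : (Fin d → ℝ) → ℝ) (hu : LocallyIntegrableOn u Ω) :
    ENNReal.ofReal (min (β₀ / α₀) (β₁ / α₁)) * TGV2 Ω α₀ α₁ u ≤ TGV2 Ω β₀ β₁ u ∧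
    TGV2 Ω β₀ β₁ u ≤ ENNReal.ofReal (max (β₀ / α₀) (β₁ / α₁)) * TGV2 Ω α₀ α₁ u :=
  tgv2_weights_equiv_general Ω α₀ α₁ β₀ β₁ hα₀ hα₁ hβ₀ hβ₁ u

end
end

section
/- Rotational invariance of second-order TGV: let O be an orthogonal d×d matrix and set Ω' := O⁻¹(Ω) = { x ∈ ℝ^d : O x ∈ Ω }. For every locally integrable u : Ω → ℝ, the function u∘O : Ω' → ℝ, x ↦ u(Ox), satisfies TGV²_α(u∘O) (computed on the domain Ω') = TGV²_α(u) (computed on the domain Ω). -/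
open MeasureTheory Filter Topology
open scoped ENNReal

noncomputable section

/-! If `v` is an admissible test field on `Ω`, then `Oᵀ v(O·) O` is one on `O⁻¹Ω`: both pointwise
norms are orthogonally invariant, and the chain rule gives `div (Oᵀ v(O·) O) = Oᵀ (div v)(O·)`,
hence `div² (Oᵀ v(O·) O) = (div² v)(O·)`. As `x ↦ Ox` preserves Lebesgue measure, the pairing with
`u` is unchanged, so `TGV²(u) ≤ TGV²(u ∘ O)`; applying this to `Oᵀ` gives the reverse inequality. -/

open Matrix

section Orthogonal

variable {d : ℕ} {O : Matrix (Fin d) (Fin d) ℝ}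

lemma sum_sum_sum_mul_mul_eq_sum_diag (hO : O * Oᵀ = 1) (g : Fin d → Fin d → ℝ) :
    ∑ j, ∑ k, ∑ m, O k j * O m j * g k m = ∑ k, g k k := by
  have hcontract : ∀ k m, ∑ j, O k j * O m j * g k m = (if k = m then 1 else 0) * g k m :=
    fun k m => by
      rw [← Finset.sum_mul, ← one_apply, ← hO]
      simp [mul_apply]
  calc ∑ j, ∑ k, ∑ m, O k j * O m j * g k m = ∑ k, ∑ m, ∑ j, O k j * O m j * g k m := by
        rw [Finset.sum_comm]
        exact Finset.sum_congr rfl fun k _ => Finset.sum_comm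
    _ = ∑ k, g k k := by simp [hcontract]

lemma Matrix.IsSymm.transpose_mul_mul {M : Matrix (Fin d) (Fin d) ℝ} (hM : M.IsSymm)
    (O : Matrix (Fin d) (Fin d) ℝ) : (Oᵀ * M * O).IsSymm := by
  simp [IsSymm, transpose_mul, hM.eq, Matrix.mul_assoc]

lemma enorm2_eq_sqrt_dotProduct (w : Fin d → ℝ) : enorm2 w = √(w ⬝ᵥ w) := by
  simp [enorm2, dotProduct, sq]

lemma enorm2_vecMul (hO : O * Oᵀ = 1) (w : Fin d → ℝ) : enorm2 (w ᵥ* O) = enorm2 w := by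
  rw [enorm2_eq_sqrt_dotProduct, enorm2_eq_sqrt_dotProduct, ← dotProduct_mulVec,
    ← vecMul_transpose, vecMul_vecMul, hO, vecMul_one]

lemma fnorm2_eq_sqrt_trace {M : Matrix (Fin d) (Fin d) ℝ} (hM : M.IsSymm) :
    fnorm2 M = √(M * Mᵀ).trace := by
  have hsplit : ∀ i j, M i j ^ 2 = ((if i = j then M i i ^ 2 else 0) +
      (if i < j then M i j ^ 2 else 0)) + (if j < i then M j i ^ 2 else 0) := fun i j => by
    rcases lt_trichotomy i j with h | rfl | h
    · simp [h, h.ne, h.not_gt]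
    · simp
    · simp [h, h.ne', h.not_gt, hM.apply i j]
  have htrace : (M * Mᵀ).trace = ∑ i, ∑ j, M i j ^ 2 := by
    simp [trace, mul_apply, sq]
  rw [htrace]
  unfold fnorm2
  congr 1
  rw [Finset.sum_congr rfl fun i _ => Finset.sum_congr rfl fun j _ => hsplit i j]
  simp only [Finset.sum_add_distrib]
  rw [Finset.sum_comm (f := fun i j => if j < i then M j i ^ 2 else 0)]
  simp only [Finset.sum_ite_eq, Finset.mem_univ, if_true]
  ring

lemma fnorm2_transpose_mul_mul (hO : O * Oᵀ = 1) {M : Matrix (Fin d) (Fin d) ℝ}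
    (hM : M.IsSymm) : fnorm2 (Oᵀ * M * O) = fnorm2 M := by
  rw [fnorm2_eq_sqrt_trace hM, fnorm2_eq_sqrt_trace (hM.transpose_mul_mul O), transpose_mul,
    transpose_mul, transpose_transpose]
  congr 1
  calc (Oᵀ * M * O * (Oᵀ * (Mᵀ * O))).trace = (Oᵀ * (M * Mᵀ) * O).trace := by
        simp only [Matrix.mul_assoc, ← Matrix.mul_assoc O Oᵀ, hO, Matrix.one_mul]
    _ = (M * Mᵀ).trace := by
        rw [trace_mul_cycle, ← Matrix.mul_assoc, hO, Matrix.one_mul]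

lemma measurePreserving_mulVec (hO : O * Oᵀ = 1) :
    MeasurePreserving (O *ᵥ ·) volume volume := by
  have hdet : O.det * O.det = 1 := by
    simpa [det_mul, det_transpose] using congrArg det hO
  have habs : |O.det| = 1 := by
    rcases mul_self_eq_one_iff.mp hdet with h | h <;> simp [h]
  refine ⟨(toLin' O).continuous_of_finiteDimensional.measurable, ?_⟩
  have hmap := Real.map_matrix_volume_pi_eq_smul_volume_pi (M := O) fun h => by
    simp [h] at hdet
  rw [show ⇑(toLin' O) = (O *ᵥ ·) from funext (toLin'_apply O)] at hmap
  simp [hmap, abs_inv, habs]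

def orthogonalEquiv (hO : O * Oᵀ = 1) : (Fin d → ℝ) ≃L[ℝ] (Fin d → ℝ) :=
  (toLin'OfInv (mul_eq_one_comm.mp hO) hO).toContinuousLinearEquiv

@[simp]
lemma coe_orthogonalEquiv (hO : O * Oᵀ = 1) : ⇑(orthogonalEquiv hO) = (O *ᵥ ·) := rfl

end Orthogonal

section Calculus

variable {d : ℕ}

lemma pd_sum {ι : Type*} (s : Finset ι) {f : ι → (Fin d → ℝ) → ℝ} {x : Fin d → ℝ}
    (hf : ∀ k ∈ s, DifferentiableAt ℝ (f k) x) (j : Fin d) :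
    pd j (fun y => ∑ k ∈ s, f k y) x = ∑ k ∈ s, pd j (f k) x := by
  simp [pd, fderiv_fun_sum hf]

lemma pd_const_mul (c : ℝ) {f : (Fin d → ℝ) → ℝ} {x : Fin d → ℝ}
    (hf : DifferentiableAt ℝ f x) (j : Fin d) :
    pd j (fun y => c * f y) x = c * pd j f x := by
  simp [pd, fderiv_const_mul hf]

lemma pd_comp_mulVec (O : Matrix (Fin d) (Fin d) ℝ) {f : (Fin d → ℝ) → ℝ} {x : Fin d → ℝ}
    (hf : DifferentiableAt ℝ f (O *ᵥ x)) (j : Fin d) :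
    pd j (fun y => f (O *ᵥ y)) x = ∑ m, O m j * pd m f (O *ᵥ x) := by
  let L : (Fin d → ℝ) →L[ℝ] (Fin d → ℝ) := LinearMap.toContinuousLinearMap (toLin' O)
  have hcol : L (Pi.single j 1) = ∑ m, O m j • Pi.single m 1 := by
    ext i
    simp [L, mulVec_single, Finset.sum_apply, Pi.single_apply]
  have hf' : DifferentiableAt ℝ f (L x) := hf
  change fderiv ℝ (f ∘ L) x _ = _
  rw [fderiv_comp x hf' L.differentiableAt, L.fderiv]
  simp [hcol, pd, L]

lemma contDiff_pd {n : ℕ} {f : (Fin d → ℝ) → ℝ} (hf : ContDiff ℝ (n + 1) f) (j : Fin d) :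
    ContDiff ℝ n (pd j f) :=
  (hf.fderiv_right le_rfl).clm_apply contDiff_const

lemma contDiff_mulVec (O : Matrix (Fin d) (Fin d) ℝ) {n : WithTop ℕ∞} :
    ContDiff ℝ n (O *ᵥ ·) :=
  (LinearMap.toContinuousLinearMap (toLin' O)).contDiff

end Calculus

section Divergence

variable {d : ℕ} {O : Matrix (Fin d) (Fin d) ℝ}

lemma vdiv_comp_mulVec_vecMul (hO : O * Oᵀ = 1) {φ : (Fin d → ℝ) → Fin d → ℝ}
    {x : Fin d → ℝ} (hφ : DifferentiableAt ℝ φ (O *ᵥ x)) :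
    vdiv (fun y => φ (O *ᵥ y) ᵥ* O) x = vdiv φ (O *ᵥ x) := by
  have hφk : ∀ k, DifferentiableAt ℝ (fun z => φ z k) (O *ᵥ x) := differentiableAt_pi.1 hφ
  have hφOk : ∀ k, DifferentiableAt ℝ (fun y => φ (O *ᵥ y) k) x := fun k =>
    (hφk k).comp x ((contDiff_mulVec O (n := 1)).differentiable one_ne_zero).differentiableAt
  have hcomp : ∀ j, pd j (fun y => (φ (O *ᵥ y) ᵥ* O) j) x
      = ∑ k, O k j * ∑ m, O m j * pd m (fun z => φ z k) (O *ᵥ x) := fun j => by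
    simp only [vecMul, dotProduct, mul_comm (φ _ _)]
    rw [pd_sum _ (fun k _ => (hφOk k).const_mul _)]
    refine Finset.sum_congr rfl fun k _ => ?_
    rw [pd_const_mul _ (hφOk k), pd_comp_mulVec O (hφk k)]
  simp only [vdiv, hcomp, Finset.mul_sum, ← mul_assoc]
  exact sum_sum_sum_mul_mul_eq_sum_diag hO _

def rotateField (O : Matrix (Fin d) (Fin d) ℝ) (v : (Fin d → ℝ) → Fin d → Fin d → ℝ)
    (y : Fin d → ℝ) : Fin d → Fin d → ℝ :=
  Oᵀ * of (v (O *ᵥ y)) * O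

lemma mdiv_rotateField (hO : O * Oᵀ = 1) {v : (Fin d → ℝ) → Fin d → Fin d → ℝ}
    (hv : Differentiable ℝ v) (x : Fin d → ℝ) :
    mdiv (rotateField O v) x = mdiv v (O *ᵥ x) ᵥ* O := by
  ext i
  have hentry : ∀ k j, Differentiable ℝ fun z => v z k j := fun k j =>
    differentiable_pi.1 (differentiable_pi.1 hv k) j
  have hrow : Differentiable ℝ fun z => (Oᵀ * of (v z)) i := by
    refine differentiable_pi.2 fun j => ?_
    simp only [mul_apply, transpose_apply, of_apply]
    fun_prop
  calc mdiv (rotateField O v) x i = vdiv (fun z => (Oᵀ * of (v z)) i) (O *ᵥ x) :=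
        vdiv_comp_mulVec_vecMul hO (hrow _)
    _ = ∑ j, ∑ k, O k i * pd j (fun z => v z k j) (O *ᵥ x) := by
        simp only [vdiv, mul_apply, transpose_apply, of_apply]
        refine Finset.sum_congr rfl fun j _ => ?_
        rw [pd_sum _ fun k _ => ((hentry k j).const_mul _).differentiableAt]
        exact Finset.sum_congr rfl fun k _ => pd_const_mul _ (hentry k j).differentiableAt j
    _ = (mdiv v (O *ᵥ x) ᵥ* O) i := by
        simp only [mdiv, vecMul, dotProduct, Finset.sum_mul, mul_comm (pd _ _ _)]
        exact Finset.sum_comm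

lemma contDiff_rotateField {n : WithTop ℕ∞} {v : (Fin d → ℝ) → Fin d → Fin d → ℝ}
    (hv : ContDiff ℝ n v) : ContDiff ℝ n (rotateField O v) := by
  have hentry : ∀ k l, ContDiff ℝ n fun y => v (O *ᵥ y) k l := fun k l =>
    (contDiff_pi.1 (contDiff_pi.1 hv k) l).comp (contDiff_mulVec O)
  refine contDiff_pi.2 fun i => contDiff_pi.2 fun j => ?_
  simp only [rotateField, mul_apply, transpose_apply, of_apply]
  exact ContDiff.sum fun l _ =>
    (ContDiff.sum fun k _ => contDiff_const.mul (hentry k l)).mul contDiff_const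

lemma contDiff_mdiv {n : ℕ} {v : (Fin d → ℝ) → Fin d → Fin d → ℝ} (hv : ContDiff ℝ (n + 1) v) :
    ContDiff ℝ n (mdiv v) :=
  contDiff_pi.2 fun i => ContDiff.sum fun j _ =>
    contDiff_pd (contDiff_pi.1 (contDiff_pi.1 hv i) j) j

lemma mdiv2_eq_vdiv_mdiv {v : (Fin d → ℝ) → Fin d → Fin d → ℝ} (hv : ContDiff ℝ 2 v)
    (x : Fin d → ℝ) : mdiv2 v x = vdiv (mdiv v) x := by
  refine Finset.sum_congr rfl fun i _ => (pd_sum _ (fun j _ => ?_) i).symm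
  exact ((contDiff_pd (contDiff_pi.1 (contDiff_pi.1 hv i) j) j).differentiable
    one_ne_zero).differentiableAt

lemma mdiv2_rotateField (hO : O * Oᵀ = 1) {v : (Fin d → ℝ) → Fin d → Fin d → ℝ}
    (hv : ContDiff ℝ 2 v) (x : Fin d → ℝ) :
    mdiv2 (rotateField O v) x = mdiv2 v (O *ᵥ x) := by
  have hmdiv : ContDiff ℝ 1 (mdiv v) := contDiff_mdiv hv
  rw [mdiv2_eq_vdiv_mdiv (contDiff_rotateField hv), mdiv2_eq_vdiv_mdiv hv,
    funext (mdiv_rotateField hO (hv.differentiable two_ne_zero))]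
  exact vdiv_comp_mulVec_vecMul hO ((hmdiv.differentiable one_ne_zero) _)

end Divergence

section TGV

variable {d : ℕ} {O : Matrix (Fin d) (Fin d) ℝ}

lemma TGVtest.rotate {Ω : Set (Fin d → ℝ)} {α₀ α₁ : ℝ}
    {v : (Fin d → ℝ) → Fin d → Fin d → ℝ} (hO : O * Oᵀ = 1) (hv : TGVtest Ω α₀ α₁ v) :
    TGVtest {x | O *ᵥ x ∈ Ω} α₀ α₁ (rotateField O v) := by
  obtain ⟨hsmooth, hcompact, hsupp, hsymm, hbound₀, hbound₁⟩ := hv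
  have hsymm' : ∀ y, (of (v y)).IsSymm := fun y => IsSymm.ext fun i j => hsymm y j i
  have htsupport : tsupport (rotateField O v) ⊆ (O *ᵥ ·) ⁻¹' tsupport v := by
    refine closure_minimal (fun x hx => ?_)
      ((isClosed_tsupport v).preimage (contDiff_mulVec O (n := 0)).continuous)
    by_contra hvx
    exact hx (funext₂ fun i j => by
      simp [rotateField, mul_apply, image_eq_zero_of_notMem_tsupport hvx])
  refine ⟨contDiff_rotateField hsmooth, ?_, htsupport.trans (Set.preimage_mono hsupp),
    fun x i j => ((hsymm' (O *ᵥ x)).transpose_mul_mul O).apply j i,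
    fun x hx => ?_, fun x hx => ?_⟩
  · rw [← coe_orthogonalEquiv hO] at htsupport
    exact ((orthogonalEquiv hO).toHomeomorph.isCompact_preimage.2 hcompact).of_isClosed_subset
      (isClosed_tsupport _) htsupport
  · exact (fnorm2_transpose_mul_mul hO (hsymm' _)).trans_le (hbound₀ _ hx)
  · rw [mdiv_rotateField hO (hsmooth.differentiable two_ne_zero), enorm2_vecMul hO]
    exact hbound₁ _ hx

lemma TGV2_le_TGV2_comp_mulVec (hO : O * Oᵀ = 1) (Ω : Set (Fin d → ℝ)) (α₀ α₁ : ℝ)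
    (u : (Fin d → ℝ) → ℝ) :
    TGV2 Ω α₀ α₁ u ≤ TGV2 {x | O *ᵥ x ∈ Ω} α₀ α₁ (fun x => u (O *ᵥ x)) := by
  refine iSup₂_le fun v hv => le_iSup₂_of_le (rotateField O v) (hv.rotate hO) ?_
  have hchange := (measurePreserving_mulVec hO).setIntegral_preimage_emb
    (orthogonalEquiv hO).toHomeomorph.measurableEmbedding (fun y => u y * mdiv2 v y) Ω
  simp only [← hchange, mdiv2_rotateField hO hv.1]
  rfl

end TGV

theorem tgv2_rotation_invariant_general {d : ℕ} (Ω : Set (Fin d → ℝ))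
    (α₀ α₁ : ℝ) (u : (Fin d → ℝ) → ℝ)
    (O : Matrix (Fin d) (Fin d) ℝ) (hO : O.transpose * O = 1) :
    TGV2 {x : Fin d → ℝ | O.mulVec x ∈ Ω} α₀ α₁ (fun x => u (O.mulVec x))
      = TGV2 Ω α₀ α₁ u := by
  have hO' : O * Oᵀ = 1 := mul_eq_one_comm.mp hO
  have hOt : Oᵀ * Oᵀᵀ = 1 := by rwa [transpose_transpose]
  refine le_antisymm ?_ (TGV2_le_TGV2_comp_mulVec hO' Ω α₀ α₁ u)
  simpa [mulVec_mulVec, hO'] using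
    TGV2_le_TGV2_comp_mulVec hOt {x | O *ᵥ x ∈ Ω} α₀ α₁ (fun x => u (O *ᵥ x))

/-- Rotational invariance of second-order TGV. -/
theorem tgv2_rotation_invariant {d : ℕ} (hd : 1 ≤ d) (Ω : Set (Fin d → ℝ))
    (hΩo : IsOpen Ω) (hΩb : Bornology.IsBounded Ω)
    (α₀ α₁ : ℝ) (hα₀ : 0 < α₀) (hα₁ : 0 < α₁)
    (u : (Fin d → ℝ) → ℝ) (hu : LocallyIntegrableOn u Ω)
    (O : Matrix (Fin d) (Fin d) ℝ) (hO : O.transpose * O = 1) :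
    TGV2 {x : Fin d → ℝ | O.mulVec x ∈ Ω} α₀ α₁ (fun x => u (O.mulVec x))
      = TGV2 Ω α₀ α₁ u :=
  tgv2_rotation_invariant_general Ω α₀ α₁ u O hO
end
end

section
/- Lower semicontinuity of second-order TGV on Lᵖ: let 1 ≤ p < ∞. If (uₙ) is a sequence in Lᵖ(Ω) converging to u strongly in Lᵖ(Ω), then TGV²_α(u) ≤ liminf_{n→∞} TGV²_α(uₙ) (liminf taken in [0,∞]). -/
open MeasureTheory Filter Topology
open scoped ENNReal

noncomputable section

/-! The functional `TGV2 Ω α₀ α₁` is a supremum of the linear functionals `u ↦ ∫_Ω u · div² v`.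
Each of them is continuous along `Lᵖ`-convergent sequences: `div² v` is continuous with compact
support, hence bounded, and on the bounded set `Ω` convergence in `Lᵖ`, `p ≥ 1`, implies
convergence in `L¹`. A supremum of such functionals is lower semicontinuous. -/

section SecondDivergence

variable {d : ℕ}

theorem ContDiff.pd {n : WithTop ℕ∞} {f : (Fin d → ℝ) → ℝ} (hf : ContDiff ℝ (n + 1) f)
    (j : Fin d) : ContDiff ℝ n (pd j f) :=
  (hf.fderiv_right le_rfl).clm_apply contDiff_const

theorem HasCompactSupport.pd {f : (Fin d → ℝ) → ℝ} (hf : HasCompactSupport f) (j : Fin d) :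
    HasCompactSupport (pd j f) :=
  hf.fderiv_apply ℝ _

theorem mdiv2_eq_sum (v : (Fin d → ℝ) → Fin d → Fin d → ℝ) :
    mdiv2 v = ∑ i, ∑ j, pd i (pd j fun y => v y i j) := by
  ext x
  simp only [mdiv2, Finset.sum_apply]

theorem continuous_mdiv2 {v : (Fin d → ℝ) → Fin d → Fin d → ℝ} (hv : ContDiff ℝ 2 v) :
    Continuous (mdiv2 v) := by
  refine continuous_finsetSum _ fun i _ => continuous_finsetSum _ fun j _ => ?_
  have hvij : ContDiff ℝ (0 + 1 + 1) fun y => v y i j := contDiff_pi.1 (contDiff_pi.1 hv i) j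
  exact ((hvij.pd j).pd i).continuous

theorem HasCompactSupport.mdiv2 {v : (Fin d → ℝ) → Fin d → Fin d → ℝ} (hv : HasCompactSupport v) :
    HasCompactSupport (mdiv2 v) := by
  rw [mdiv2_eq_sum]
  refine HasCompactSupport.finset_sum fun i _ => HasCompactSupport.finset_sum fun j _ => ?_
  have hvij : HasCompactSupport fun y => v y i j :=
    hv.comp_left (g := fun M : Fin d → Fin d → ℝ => M i j) rfl
  exact (hvij.pd j).pd i

end SecondDivergence

theorem tendsto_eLpNorm_one_of_tendsto_eLpNorm {α ι E : Type*} [MeasurableSpace α]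
    [NormedAddCommGroup E] {μ : Measure α} [IsFiniteMeasure μ] {p : ℝ≥0∞} (hp : 1 ≤ p)
    {l : Filter ι} {f : ι → α → E} (hf : ∀ i, AEStronglyMeasurable (f i) μ)
    (hlim : Tendsto (fun i => eLpNorm (f i) p μ) l (𝓝 0)) :
    Tendsto (fun i => eLpNorm (f i) 1 μ) l (𝓝 0) := by
  have hexp : 0 ≤ 1 / (1 : ℝ≥0∞).toReal - 1 / p.toReal := by
    rcases eq_or_ne p ⊤ with rfl | hp_top
    · simp
    · have : 1 ≤ p.toReal := by simpa using ENNReal.toReal_mono hp_top hp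
      simpa using inv_le_one_of_one_le₀ this
  have hc := ENNReal.rpow_ne_top_of_nonneg hexp (measure_ne_top μ Set.univ)
  refine tendsto_of_tendsto_of_tendsto_of_le_of_le tendsto_const_nhds ?_ (fun i => zero_le)
    fun i => eLpNorm_le_eLpNorm_mul_rpow_measure_univ hp (hf i)
  simpa using ENNReal.Tendsto.mul_const hlim (Or.inr hc)

theorem tendsto_integral_mul_of_tendsto_eLpNorm {α ι : Type*} [MeasurableSpace α]
    {μ : Measure α} [IsFiniteMeasure μ] {p : ℝ≥0∞} (hp : 1 ≤ p) {l : Filter ι}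
    {u : ι → α → ℝ} {u₀ g : α → ℝ} (hu : ∀ i, MemLp (u i) p μ) (hu₀ : MemLp u₀ p μ)
    (hconv : Tendsto (fun i => eLpNorm (u i - u₀) p μ) l (𝓝 0))
    (hg : AEStronglyMeasurable g μ) {C : ℝ} (hgC : ∀ᵐ x ∂μ, ‖g x‖ ≤ C) :
    Tendsto (fun i => ∫ x, u i x * g x ∂μ) l (𝓝 (∫ x, u₀ x * g x ∂μ)) := by
  have hL1 := tendsto_eLpNorm_one_of_tendsto_eLpNorm hp
    (fun i => ((hu i).sub hu₀).aestronglyMeasurable) hconv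
  refine tendsto_integral_of_L1' _ (hu₀.aestronglyMeasurable.mul hg)
    (.of_forall fun i => ((hu i).integrable hp).mul_bdd hg hgC) ?_
  have hbound : ∀ i, eLpNorm (fun x => u i x * g x - u₀ x * g x) 1 μ
      ≤ ENNReal.ofReal C * eLpNorm (u i - u₀) 1 μ := fun i =>
    eLpNorm_le_mul_eLpNorm_of_ae_le_mul (hgC.mono fun x hx => by
      simp only [Pi.sub_apply, ← sub_mul, norm_mul]
      rw [mul_comm]
      exact mul_le_mul_of_nonneg_right hx (norm_nonneg _)) 1
  refine tendsto_of_tendsto_of_tendsto_of_le_of_le tendsto_const_nhds ?_ (fun i => zero_le)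
    hbound
  simpa using ENNReal.Tendsto.const_mul hL1 (Or.inr ENNReal.ofReal_ne_top)

theorem ofReal_integral_mul_mdiv2_le_TGV2 {d : ℕ} {Ω : Set (Fin d → ℝ)} {α₀ α₁ : ℝ}
    {v : (Fin d → ℝ) → Fin d → Fin d → ℝ} (hv : TGVtest Ω α₀ α₁ v) (u : (Fin d → ℝ) → ℝ) :
    ENNReal.ofReal (∫ x in Ω, u x * mdiv2 v x) ≤ TGV2 Ω α₀ α₁ u :=
  le_iSup₂ (f := fun v (_ : TGVtest Ω α₀ α₁ v) => ENNReal.ofReal (∫ x in Ω, u x * mdiv2 v x)) v hv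

theorem tgv2_lsc_Lp_general {d : ℕ} (Ω : Set (Fin d → ℝ))
    (hΩb : Bornology.IsBounded Ω)
    (α₀ α₁ : ℝ)
    (p : ℝ) (hp : 1 ≤ p)
    (u : ℕ → (Fin d → ℝ) → ℝ) (u₀ : (Fin d → ℝ) → ℝ)
    (hu : ∀ n, MemLp (u n) (ENNReal.ofReal p) (volume.restrict Ω))
    (hu₀ : MemLp u₀ (ENNReal.ofReal p) (volume.restrict Ω))
    (hconv : Tendsto (fun n => eLpNorm (u n - u₀) (ENNReal.ofReal p) (volume.restrict Ω))
      atTop (𝓝 0)) :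
    TGV2 Ω α₀ α₁ u₀ ≤ Filter.liminf (fun n => TGV2 Ω α₀ α₁ (u n)) atTop := by
  have : IsFiniteMeasure (volume.restrict Ω) := isFiniteMeasure_restrict.2 hΩb.measure_lt_top.ne
  refine iSup₂_le fun v hv => ?_
  obtain ⟨C, hC⟩ := hv.2.1.mdiv2.exists_bound_of_continuous (continuous_mdiv2 hv.1)
  have hlim := tendsto_integral_mul_of_tendsto_eLpNorm (ENNReal.one_le_ofReal.2 hp) hu hu₀ hconv
    (continuous_mdiv2 hv.1).aestronglyMeasurable (.of_forall hC)
  calc ENNReal.ofReal (∫ x in Ω, u₀ x * mdiv2 v x)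
      = liminf (fun n => ENNReal.ofReal (∫ x in Ω, u n x * mdiv2 v x)) atTop :=
        ((ENNReal.continuous_ofReal.tendsto _).comp hlim).liminf_eq.symm
    _ ≤ liminf (fun n => TGV2 Ω α₀ α₁ (u n)) atTop :=
        liminf_le_liminf (.of_forall fun n => ofReal_integral_mul_mdiv2_le_TGV2 hv (u n))

/-- Lower semicontinuity of second-order TGV on `Lᵖ(Ω)`, `1 ≤ p < ∞`. -/
theorem tgv2_lsc_Lp {d : ℕ} (hd : 1 ≤ d) (Ω : Set (Fin d → ℝ))
    (hΩo : IsOpen Ω) (hΩb : Bornology.IsBounded Ω)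
    (α₀ α₁ : ℝ) (hα₀ : 0 < α₀) (hα₁ : 0 < α₁)
    (p : ℝ) (hp : 1 ≤ p)
    (u : ℕ → (Fin d → ℝ) → ℝ) (u₀ : (Fin d → ℝ) → ℝ)
    (hu : ∀ n, MemLp (u n) (ENNReal.ofReal p) (volume.restrict Ω))
    (hu₀ : MemLp u₀ (ENNReal.ofReal p) (volume.restrict Ω))
    (hconv : Tendsto (fun n => eLpNorm (u n - u₀) (ENNReal.ofReal p) (volume.restrict Ω))
      atTop (𝓝 0)) :
    TGV2 Ω α₀ α₁ u₀ ≤ Filter.liminf (fun n => TGV2 Ω α₀ α₁ (u n)) atTop :=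
  tgv2_lsc_Lp_general Ω hΩb α₀ α₁ p hp u u₀ hu hu₀ hconv

end
end

section
/- Uniform control of TV by the distance of Du to rigid displacements: assume Ω is in addition connected. Then there exists a constant C₁ > 0 such that for every u ∈ L¹(Ω) and every skew-symmetric matrix A ∈ ℝ^{d×d} (Aᵀ = −A) and b ∈ ℝ^d, with w̄(x) := A x + b, one has TV(u) ≤ C₁ ( ‖Du − w̄‖_M + ‖u‖_{L¹(Ω)} ) (inequality in [0,∞]). -/
open MeasureTheory Filter Topology
open scoped ENNReal

noncomputable section

/-!
Testing `Du - w` against the bump fields `ψ(· - c) eᵢ`, whose support lies in `Ω`, bounds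
`|∫ wᵢ(x) ψ(x - c) dx|` by `‖Du - w‖_M + ‖∇ψ‖_∞ ‖u‖_{L¹}`. For affine `w` and even `ψ` this
integral is `(∫ ψ) wᵢ(c)`, so `w` is bounded on a small ball, hence, being affine, on the bounded
set `Ω`. Then `∫ u div φ = ⟨Du - w, φ⟩ - ∫ w · φ` is bounded uniformly over the test fields `φ`.
-/

open Metric

theorem TVar_empty {d : ℕ} (u : (Fin d → ℝ) → ℝ) : TVar ∅ u = 0 := by
  simp [TVar]

section TestFields

variable {d : ℕ} {Ω : Set (Fin d → ℝ)} {φ : (Fin d → ℝ) → Fin d → ℝ}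
  {u : (Fin d → ℝ) → ℝ} {w : (Fin d → ℝ) → Fin d → ℝ}

theorem vdiv_neg (φ : (Fin d → ℝ) → Fin d → ℝ) : vdiv (fun y => -φ y) = -vdiv φ := by
  ext x
  simp only [vdiv, pd, Pi.neg_apply, fderiv_fun_neg, neg_apply, Finset.sum_neg_distrib]

theorem hasCompactSupport_vdiv (hφ : HasCompactSupport φ) : HasCompactSupport (vdiv φ) := by
  have hsum : vdiv φ = ∑ j, pd j (fun y => φ y j) := by
    ext x; simp only [vdiv, Finset.sum_apply]
  rw [hsum]
  exact HasCompactSupport.finset_sum fun j _ =>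
    ((hφ.comp_left (g := fun v : Fin d → ℝ => v j) rfl).fderiv ℝ).comp_left
      (g := fun L : (Fin d → ℝ) →L[ℝ] ℝ => L (Pi.single j 1)) rfl

namespace TVtest

theorem neg (hφ : TVtest Ω φ) : TVtest Ω (fun x => -φ x) := by
  obtain ⟨hdiff, hcs, hsupp, hnorm⟩ := hφ
  refine ⟨hdiff.neg, hcs.neg, (tsupport_neg φ).subset.trans hsupp, fun x hx => ?_⟩
  simpa [enorm2] using hnorm x hx

theorem continuous_vdiv (hφ : TVtest Ω φ) : Continuous (vdiv φ) :=
  continuous_finsetSum _ fun j _ =>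
    (ContinuousLinearMap.apply ℝ ℝ (Pi.single j 1)).continuous.comp
      ((contDiff_pi.mp hφ.1 j).continuous_fderiv one_ne_zero)

theorem integrableOn_mul_vdiv (hφ : TVtest Ω φ) (hu : IntegrableOn u Ω) :
    IntegrableOn (fun x => u x * vdiv φ x) Ω := by
  obtain ⟨C, hC⟩ := (hasCompactSupport_vdiv hφ.2.1).exists_bound_of_continuous hφ.continuous_vdiv
  exact hu.mul_bdd hφ.continuous_vdiv.aestronglyMeasurable (Eventually.of_forall hC)

theorem integrableOn_sum_mul (hφ : TVtest Ω φ) (hw : Continuous w) :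
    IntegrableOn (fun x => ∑ i, w x i * φ x i) Ω := by
  have hφc := hφ.1.continuous
  refine (Continuous.integrable_of_hasCompactSupport (by fun_prop) ?_).integrableOn
  refine hφ.2.1.mono fun x hx => ?_
  contrapose! hx
  simp [Function.notMem_support.mp hx]

theorem ofReal_integral_le_MnormDuSub (hφ : TVtest Ω φ) :
    ENNReal.ofReal (∫ x in Ω, (u x * vdiv φ x + ∑ i, w x i * φ x i)) ≤ MnormDuSub Ω u w :=
  le_iSup₂ (f := fun φ (_ : TVtest Ω φ) =>
    ENNReal.ofReal (∫ x in Ω, (u x * vdiv φ x + ∑ i, w x i * φ x i))) φ hφ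

theorem abs_integral_add_le (hφ : TVtest Ω φ) (hu : IntegrableOn u Ω) (hw : Continuous w)
    (hfin : MnormDuSub Ω u w ≠ ⊤) :
    |(∫ x in Ω, u x * vdiv φ x) + ∫ x in Ω, ∑ i, w x i * φ x i| ≤ (MnormDuSub Ω u w).toReal := by
  have pairing_le {ψ} (hψ : TVtest Ω ψ) :
      ∫ x in Ω, (u x * vdiv ψ x + ∑ i, w x i * ψ x i) ≤ (MnormDuSub Ω u w).toReal :=
    (ENNReal.ofReal_le_iff_le_toReal hfin).mp hψ.ofReal_integral_le_MnormDuSub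
  have hneg := pairing_le hφ.neg
  simp only [vdiv_neg, Pi.neg_apply, mul_neg, Finset.sum_neg_distrib, ← neg_add,
    integral_neg] at hneg
  rw [← integral_add (hφ.integrableOn_mul_vdiv hu) (hφ.integrableOn_sum_mul hw), abs_le]
  exact ⟨by linarith, pairing_le hφ⟩

theorem abs_sum_mul_le (hφ : TVtest Ω φ) {x : Fin d → ℝ} (hx : x ∈ Ω) (v : Fin d → ℝ) :
    |∑ i, v i * φ x i| ≤ d * ‖v‖ := by
  have hφi (i : Fin d) : |φ x i| ≤ 1 := by
    refine le_trans ?_ (hφ.2.2.2 x hx)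
    rw [enorm2, ← Real.sqrt_sq_eq_abs]
    exact Real.sqrt_le_sqrt
      (Finset.single_le_sum (fun j _ => sq_nonneg (φ x j)) (Finset.mem_univ i))
  calc |∑ i, v i * φ x i| ≤ ∑ i, |v i| * |φ x i| := by
        simpa only [abs_mul] using Finset.abs_sum_le_sum_abs (fun i => v i * φ x i) Finset.univ
    _ ≤ ∑ _i : Fin d, ‖v‖ * (1 : ℝ) := by
        gcongr with i
        · exact norm_le_pi_norm v i
        · exact hφi i
    _ = d * ‖v‖ := by simp

end TVtest

theorem TVar_le_MnormDuSub_add (hu : IntegrableOn u Ω) (hw : Continuous w) (hΩ : volume Ω < ⊤)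
    {W : ℝ} (hW : ∀ x ∈ Ω, ‖w x‖ ≤ W) :
    TVar Ω u ≤ MnormDuSub Ω u w + ENNReal.ofReal (d * W * volume.real Ω) := by
  refine iSup₂_le fun φ hφ => ?_
  have hsplit := integral_add (hφ.integrableOn_mul_vdiv hu) (hφ.integrableOn_sum_mul hw)
  have hbound : |∫ x in Ω, ∑ i, w x i * φ x i| ≤ d * W * volume.real Ω :=
    norm_setIntegral_le_of_norm_le_const (f := fun x => ∑ i, w x i * φ x i) hΩ fun x hx =>
      (hφ.abs_sum_mul_le hx (w x)).trans (mul_le_mul_of_nonneg_left (hW x hx) d.cast_nonneg)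
  calc ENNReal.ofReal (∫ x in Ω, u x * vdiv φ x)
      ≤ ENNReal.ofReal ((∫ x in Ω, (u x * vdiv φ x + ∑ i, w x i * φ x i))
          + d * W * volume.real Ω) :=
        ENNReal.ofReal_le_ofReal (by linarith [(abs_le.mp hbound).1])
    _ ≤ _ := ENNReal.ofReal_add_le.trans (by gcongr; exact hφ.ofReal_integral_le_MnormDuSub)

end TestFields

theorem integral_mul_eq_zero_of_odd_of_even {E : Type*} [MeasurableSpace E] [AddGroup E]
    [MeasurableNeg E] (μ : Measure E) [μ.IsNegInvariant] {f g : E → ℝ}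
    (hf : ∀ x, f (-x) = -f x) (hg : ∀ x, g (-x) = g x) : ∫ x, f x * g x ∂μ = 0 := by
  have h := integral_neg_eq_self (fun x => f x * g x) μ
  simp only [hf, hg, neg_mul, integral_neg] at h
  linarith

theorem ContDiffBump.integral_affineMap_mul {E : Type*} [NormedAddCommGroup E]
    [NormedSpace ℝ E] [FiniteDimensional ℝ E] [HasContDiffBump E] [MeasurableSpace E]
    [BorelSpace E] (μ : Measure E) [μ.IsAddRightInvariant] [μ.IsNegInvariant]
    [IsFiniteMeasureOnCompacts μ] (ψ : ContDiffBump (0 : E)) (w : E →ᵃ[ℝ] ℝ) (c : E) :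
    ∫ x, w x * ψ (x - c) ∂μ = (∫ x, ψ x ∂μ) * w c := by
  have hw (y : E) : w (y + c) = w.linear y + w c := by
    rw [← vadd_eq_add, w.map_vadd, vadd_eq_add]
  have hint : Integrable (fun y => w.linear y * ψ y) μ :=
    ((w.linear.continuous_of_finiteDimensional).mul ψ.continuous).integrable_of_hasCompactSupport
      ψ.hasCompactSupport.mul_left
  rw [← integral_add_right_eq_self _ c]
  simp only [add_sub_cancel_right, hw, add_mul]
  rw [integral_add hint
      ((ψ.continuous.integrable_of_hasCompactSupport ψ.hasCompactSupport).const_mul (w c)),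
    integral_mul_eq_zero_of_odd_of_even μ (map_neg w.linear) ψ.neg, integral_const_mul]
  ring

section BumpFields

variable {d : ℕ} {Ω : Set (Fin d → ℝ)}

theorem vdiv_smul_single (g : (Fin d → ℝ) → ℝ) (i : Fin d) :
    vdiv (fun y => g y • Pi.single i (1 : ℝ)) = pd i g := by
  ext x
  rw [vdiv, Finset.sum_eq_single i (fun j _ hj => by simp [pd, hj]) (by simp)]
  simp

theorem abs_pd_le_norm_fderiv (g : (Fin d → ℝ) → ℝ) (j : Fin d) (x : Fin d → ℝ) :
    |pd j g x| ≤ ‖fderiv ℝ g x‖ := by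
  simpa [pd, Pi.norm_single] using (fderiv ℝ g x).le_opNorm (Pi.single j 1)

theorem ContDiffBump.apply_sub_eq_zero {E : Type*} [NormedAddCommGroup E] [NormedSpace ℝ E]
    [HasContDiffBump E] (ψ : ContDiffBump (0 : E)) {c x : E} (hx : x ∉ closedBall c ψ.rOut) :
    ψ (x - c) = 0 :=
  ψ.zero_of_le_dist <| by
    rw [dist_zero_right, ← dist_eq_norm]
    exact (lt_of_not_ge (hx ∘ mem_closedBall.mpr)).le

theorem TVtest_bump_smul_single (ψ : ContDiffBump (0 : Fin d → ℝ)) {c : Fin d → ℝ}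
    (hc : closedBall c ψ.rOut ⊆ Ω) (i : Fin d) :
    TVtest Ω (fun x => ψ (x - c) • Pi.single i (1 : ℝ)) := by
  have hzero (x) (hx : x ∉ closedBall c ψ.rOut) : ψ (x - c) • Pi.single i (1 : ℝ) = 0 := by
    rw [ψ.apply_sub_eq_zero hx, zero_smul]
  have hsupp : tsupport (fun x => ψ (x - c) • Pi.single i (1 : ℝ)) ⊆ closedBall c ψ.rOut :=
    closure_minimal (fun x hx => by_contra fun h => hx (hzero x h)) isClosed_closedBall
  refine ⟨(ψ.contDiff.comp (contDiff_id.sub contDiff_const)).smul contDiff_const,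
    HasCompactSupport.intro (isCompact_closedBall c _) hzero, hsupp.trans hc, fun x _ => ?_⟩
  simp [enorm2, Pi.single_apply, Real.sqrt_sq ψ.nonneg, ψ.le_one]

theorem setIntegral_sum_mul_bump_smul_single (ψ : ContDiffBump (0 : Fin d → ℝ))
    {c : Fin d → ℝ} (hc : closedBall c ψ.rOut ⊆ Ω) (w : (Fin d → ℝ) →ᵃ[ℝ] (Fin d → ℝ))
    (i : Fin d) :
    ∫ x in Ω, ∑ j, w x j * (ψ (x - c) • Pi.single i (1 : ℝ)) j = (∫ y, ψ y) * w c i := by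
  have hsum (x : Fin d → ℝ) : ∑ j, w x j * (ψ (x - c) • Pi.single i (1 : ℝ)) j
      = (AffineMap.proj i).comp w x * ψ (x - c) := by
    simp [Pi.single_apply]
  simp_rw [hsum]
  rw [setIntegral_eq_integral_of_forall_compl_eq_zero fun x hx => by
      rw [ψ.apply_sub_eq_zero fun h => hx (hc h), mul_zero],
    ψ.integral_affineMap_mul volume]
  rfl

end BumpFields

theorem AffineMap.norm_le_of_forall_mem_closedBall {E F : Type*} [NormedAddCommGroup E]
    [NormedSpace ℝ E] [NormedAddCommGroup F] [NormedSpace ℝ F] (f : E →ᵃ[ℝ] F) {c : E}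
    {ρ V : ℝ} (hρ : 0 < ρ) (hf : ∀ y ∈ closedBall c ρ, ‖f y‖ ≤ V) (x : E) :
    ‖f x‖ ≤ (1 + 2 * dist x c / ρ) * V := by
  have hfc : ‖f c‖ ≤ V := hf c (mem_closedBall_self hρ.le)
  rcases eq_or_ne x c with rfl | hxc
  · simpa using hfc
  set t := dist x c / ρ
  have ht : 0 < t := div_pos (dist_pos.mpr hxc) hρ
  set y := c + t⁻¹ • (x - c)
  have hy : y ∈ closedBall c ρ := by
    rw [mem_closedBall, dist_eq_norm, add_sub_cancel_left, norm_smul, ← dist_eq_norm,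
      Real.norm_of_nonneg (inv_nonneg.mpr ht.le), inv_div, div_mul_cancel₀ _ (dist_ne_zero.mpr hxc)]
  have hfx : f x = f c + t • (f y - f c) := by
    have hfy : f y - f c = t⁻¹ • (f x - f c) := by
      simp only [← vsub_eq_sub, ← f.linearMap_vsub]
      rw [vsub_eq_sub, vsub_eq_sub, show y - c = t⁻¹ • (x - c) by simp [y], map_smul]
    rw [hfy, smul_smul, mul_inv_cancel₀ ht.ne', one_smul, add_sub_cancel]
  calc ‖f x‖ ≤ ‖f c‖ + t * (‖f y‖ + ‖f c‖) := by
        rw [hfx]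
        refine (norm_add_le _ _).trans ?_
        rw [norm_smul, Real.norm_of_nonneg ht.le]
        gcongr
        exact norm_sub_le _ _
    _ ≤ V + t * (V + V) := by gcongr; exact hf y hy
    _ = (1 + 2 * dist x c / ρ) * V := by ring

theorem integral_bump_mul_norm_le {d : ℕ} {Ω : Set (Fin d → ℝ)} {u : (Fin d → ℝ) → ℝ}
    (hu : IntegrableOn u Ω) (w : (Fin d → ℝ) →ᵃ[ℝ] (Fin d → ℝ))
    (hfin : MnormDuSub Ω u w ≠ ⊤) (ψ : ContDiffBump (0 : Fin d → ℝ)) {K : ℝ}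
    (hK : ∀ y, ‖fderiv ℝ ψ y‖ ≤ K) {c : Fin d → ℝ} (hc : closedBall c ψ.rOut ⊆ Ω) :
    (∫ y, ψ y) * ‖w c‖ ≤ (MnormDuSub Ω u w).toReal + K * ∫ x in Ω, |u x| := by
  have hI : 0 < ∫ y, ψ y := ψ.integral_pos
  have hK0 : 0 ≤ K := (norm_nonneg _).trans (hK 0)
  rw [← le_div_iff₀' hI, pi_norm_le_iff_of_nonneg (by positivity)]
  intro i
  rw [Real.norm_eq_abs, le_div_iff₀' hI]
  have hφ := TVtest_bump_smul_single ψ hc i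
  have hw : Continuous w := w.continuous_of_finiteDimensional
  have hpair := hφ.abs_integral_add_le hu hw hfin
  rw [setIntegral_sum_mul_bump_smul_single ψ hc w i] at hpair
  have hvdiv : |∫ x in Ω, u x * vdiv (fun y => ψ (y - c) • Pi.single i (1 : ℝ)) x|
      ≤ K * ∫ x in Ω, |u x| := by
    rw [← integral_const_mul]
    refine (abs_integral_le_integral_abs).trans
      (integral_mono (hφ.integrableOn_mul_vdiv hu).abs (hu.abs.const_mul K) fun x => ?_)
    rw [abs_mul, mul_comm, vdiv_smul_single]
    gcongr
    exact (abs_pd_le_norm_fderiv _ i x).trans (by rw [fderiv_comp_sub]; exact hK _)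
  obtain ⟨hpair₁, hpair₂⟩ := abs_le.mp hpair
  obtain ⟨hvdiv₁, hvdiv₂⟩ := abs_le.mp hvdiv
  rw [← abs_of_pos hI, ← abs_mul, abs_le]
  constructor <;> linarith

theorem exists_TVar_le_MnormDuSub_affine {d : ℕ} {Ω : Set (Fin d → ℝ)} (hΩo : IsOpen Ω)
    (hΩb : Bornology.IsBounded Ω) (hne : Ω.Nonempty) :
    ∃ C : ℝ, 0 < C ∧ ∀ u : (Fin d → ℝ) → ℝ, IntegrableOn u Ω →
      ∀ w : (Fin d → ℝ) →ᵃ[ℝ] (Fin d → ℝ),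
        TVar Ω u ≤ ENNReal.ofReal C * (MnormDuSub Ω u w + ENNReal.ofReal (∫ x in Ω, |u x|)) := by
  obtain ⟨c₀, hc₀⟩ := hne
  obtain ⟨r, hr, hball⟩ := isOpen_iff.mp hΩo c₀ hc₀
  obtain ⟨R, hR⟩ := hΩb.subset_closedBall c₀
  have hR0 : 0 ≤ R := dist_self c₀ ▸ hR hc₀
  let ψ : ContDiffBump (0 : Fin d → ℝ) := ⟨r / 4, r / 2, by positivity, by linarith⟩
  obtain ⟨K, hK⟩ := (ψ.hasCompactSupport.fderiv ℝ).exists_bound_of_continuous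
    ((ψ.contDiff (n := 1)).continuous_fderiv one_ne_zero)
  have hK0 : 0 ≤ K := (norm_nonneg _).trans (hK 0)
  have hI : 0 < ∫ y, ψ y := ψ.integral_pos
  set L := (1 + 2 * R / (r / 4)) / ∫ y, ψ y
  have hL : 0 ≤ L := by positivity
  set vol := volume.real Ω
  refine ⟨1 + d * L * (1 + K) * vol, by positivity, fun u hu w => ?_⟩
  by_cases hfin : MnormDuSub Ω u w = ⊤
  · rw [hfin, top_add, ENNReal.mul_top (ENNReal.ofReal_pos.mpr (by positivity)).ne']
    exact le_top
  set M := (MnormDuSub Ω u w).toReal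
  set N := ∫ x in Ω, |u x|
  have hcenter : ∀ y ∈ closedBall c₀ (r / 4), ‖w y‖ ≤ (M + K * N) / ∫ y, ψ y :=
    fun y hy => (le_div_iff₀' hI).mpr <| integral_bump_mul_norm_le hu w hfin ψ hK <|
      (closedBall_subset_ball' (show r / 2 + _ < r by
        linarith [mem_closedBall.mp hy])).trans hball
  have hM : 0 ≤ M := ENNReal.toReal_nonneg
  have hN : 0 ≤ N := integral_nonneg fun x => abs_nonneg _
  have hW (x) (hx : x ∈ Ω) : ‖w x‖ ≤ L * (M + K * N) :=
    calc ‖w x‖ ≤ (1 + 2 * dist x c₀ / (r / 4)) * ((M + K * N) / ∫ y, ψ y) :=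
          w.norm_le_of_forall_mem_closedBall (by positivity) hcenter x
      _ ≤ (1 + 2 * R / (r / 4)) * ((M + K * N) / ∫ y, ψ y) := by
          gcongr
          exact mem_closedBall.mp (hR hx)
      _ = L * (M + K * N) := by ring
  have hvol : 0 ≤ vol := measureReal_nonneg
  calc TVar Ω u ≤ MnormDuSub Ω u w + ENNReal.ofReal (d * (L * (M + K * N)) * vol) :=
        TVar_le_MnormDuSub_add hu w.continuous_of_finiteDimensional hΩb.measure_lt_top hW
    _ = ENNReal.ofReal (M + d * (L * (M + K * N)) * vol) := by
        rw [ENNReal.ofReal_add hM (by positivity), ENNReal.ofReal_toReal hfin]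
    _ ≤ ENNReal.ofReal ((1 + d * L * (1 + K) * vol) * (M + N)) := by
        gcongr
        nlinarith [mul_nonneg (mul_nonneg (mul_nonneg (mul_nonneg d.cast_nonneg hL) hvol) hK0) hM,
          mul_nonneg (mul_nonneg (mul_nonneg d.cast_nonneg hL) hvol) hN]
    _ = _ := by
        rw [ENNReal.ofReal_mul (by positivity), ENNReal.ofReal_add hM hN,
          ENNReal.ofReal_toReal hfin]

theorem tv_control_by_rigid_general {d : ℕ} (Ω : Set (Fin d → ℝ))
    (hΩo : IsOpen Ω) (hΩb : Bornology.IsBounded Ω) :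
    ∃ C₁ : ℝ, 0 < C₁ ∧ ∀ u : (Fin d → ℝ) → ℝ, IntegrableOn u Ω →
      ∀ A : Matrix (Fin d) (Fin d) ℝ, A.transpose = -A → ∀ b : Fin d → ℝ,
        TVar Ω u ≤ ENNReal.ofReal C₁ *
          (MnormDuSub Ω u (fun x => A.mulVec x + b)
            + ENNReal.ofReal (∫ x in Ω, |u x|)) := by
  rcases Ω.eq_empty_or_nonempty with rfl | hne
  · exact ⟨1, one_pos, fun u _ _ _ _ => by simp [TVar_empty]⟩
  obtain ⟨C₁, hC₁, hTV⟩ := exists_TVar_le_MnormDuSub_affine hΩo hΩb hne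
  refine ⟨C₁, hC₁, fun u hu A _ b => ?_⟩
  let w : (Fin d → ℝ) →ᵃ[ℝ] (Fin d → ℝ) :=
    ⟨fun x => A.mulVec x + b, Matrix.toLin' A, fun p v => by
      simp only [vadd_eq_add, Matrix.mulVec_add, Matrix.toLin'_apply, add_assoc]⟩
  exact hTV u hu w

/-- Uniform control of TV by the distance of `Du` to rigid displacements. -/
theorem tv_control_by_rigid {d : ℕ} (hd : 1 ≤ d) (Ω : Set (Fin d → ℝ))
    (hΩo : IsOpen Ω) (hΩb : Bornology.IsBounded Ω) (hΩc : IsConnected Ω) :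
    ∃ C₁ : ℝ, 0 < C₁ ∧ ∀ u : (Fin d → ℝ) → ℝ, IntegrableOn u Ω →
      ∀ A : Matrix (Fin d) (Fin d) ℝ, A.transpose = -A → ∀ b : Fin d → ℝ,
        TVar Ω u ≤ ENNReal.ofReal C₁ *
          (MnormDuSub Ω u (fun x => A.mulVec x + b)
            + ENNReal.ofReal (∫ x in Ω, |u x|)) :=
  tv_control_by_rigid_general Ω hΩo hΩb
end
end

section
/- Kernel of the symmetrized derivative (rigid displacements): let Ω ⊆ ℝ^d be a nonempty connected open set and let w : Ω → ℝ^d be continuously differentiable with ½(∇w(x) + ∇w(x)ᵀ) = 0 for every x ∈ Ω. Then there exist a skew-symmetric matrix A ∈ ℝ^{d×d} (Aᵀ = −A) and b ∈ ℝ^d such that w(x) = A x + b for all x ∈ Ω. -/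
open MeasureTheory Filter Topology
open scoped ENNReal

noncomputable section

/-! If every `f' x` is skew for a bilinear form `B`, then along a segment
`t ↦ B (f (x + t (y - x))) (y - x)` has derivative `B (f' (y - x)) (y - x) = 0`, so
`B (f y - f x) (y - x) = 0` on convex sets. Differentiating this identity in `y` and using
skewness once more gives `B (f y - f x - f' y (y - x)) = 0`, so for nondegenerate `B` the map `f`
is affine on every ball. Hence `f'` is locally constant, thus constant on a connected open set,
and `f - f' x₀` has zero derivative there. For the dot product on `ℝ^d`, skewness of `f' x` is
`½(∇w + ∇wᵀ) = 0`. -/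

open Set

section SkewDerivative

variable {E : Type*} [NormedAddCommGroup E] [NormedSpace ℝ E]
  (B : E →L[ℝ] E →L[ℝ] ℝ) {f : E → E} {f' : E → E →L[ℝ] E} {s : Set E}

theorem apply_swap_eq_neg_of_apply_self_eq_zero {L : E →L[ℝ] E} (hL : ∀ v, B (L v) v = 0)
    (u v : E) : B (L u) v = -B (L v) u := by
  have h := hL (u + v)
  simp only [map_add, add_apply, hL u, hL v] at h
  linarith

theorem apply_sub_sub_eq_zero_of_skew (hs : Convex ℝ s) (hf : ∀ x ∈ s, HasFDerivAt f (f' x) x)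
    (hskew : ∀ x ∈ s, ∀ v, B (f' x v) v = 0) {x y : E} (hx : x ∈ s) (hy : y ∈ s) :
    B (f y - f x) (y - x) = 0 := by
  set g : ℝ → ℝ := fun t => B (f (AffineMap.lineMap x y t)) (y - x)
  have hg : ∀ t ∈ Icc (0 : ℝ) 1, HasDerivAt g 0 t := fun t ht => by
    have hmem := hs.lineMap_mem hx hy ht
    simpa only [Function.comp_def, ContinuousLinearMap.flip_apply, hskew _ hmem] using
      ((B.flip (y - x)).hasFDerivAt.comp_hasDerivAt t
        ((hf _ hmem).comp_hasDerivAt t AffineMap.hasDerivAt_lineMap))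
  have hconst := constant_of_has_deriv_right_zero
    (fun t ht => (hg t ht).continuousAt.continuousWithinAt)
    (fun t ht => (hg t (Ico_subset_Icc_self ht)).hasDerivWithinAt) 1 (right_mem_Icc.2 zero_le_one)
  simpa [g, sub_eq_zero] using hconst

theorem eq_add_apply_sub_of_skew (hB : Function.Injective B) (hs : Convex ℝ s)
    (hs_open : IsOpen s) (hf : ∀ x ∈ s, HasFDerivAt f (f' x) x)
    (hskew : ∀ x ∈ s, ∀ v, B (f' x v) v = 0) {x y : E} (hx : x ∈ s) (hy : y ∈ s) :
    f x = f y + f' y (x - y) := by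
  have hzero : HasFDerivAt (fun z => B (f z - f x) (z - x)) (0 : E →L[ℝ] ℝ) y :=
    (hasFDerivAt_const 0 y).congr_of_eventuallyEq <| eventually_of_mem (hs_open.mem_nhds hy)
      fun z hz => apply_sub_sub_eq_zero_of_skew B hs hf hskew hx hz
  have hderiv := B.hasFDerivAt_of_bilinear ((hf y hy).sub_const (f x))
    ((hasFDerivAt_id y).sub_const x)
  have hkernel : B (f y - f x - f' y (y - x)) = 0 := by
    ext h
    have := congrArg (fun L => L h) (hderiv.unique hzero)
    have hswap := apply_swap_eq_neg_of_apply_self_eq_zero B (hskew y hy) h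
    simp only [ContinuousLinearMap.precompR_apply, ContinuousLinearMap.precompL_apply,
      ContinuousLinearMap.compL_apply, ContinuousLinearMap.comp_id, id_eq, add_apply, map_sub,
      sub_apply, zero_apply] at this ⊢
    linear_combination this - hswap y + hswap x
  rw [hB.eq_iff' (map_zero B)] at hkernel
  rw [← neg_sub y x, map_neg]
  linear_combination (norm := module) -hkernel

theorem eventuallyEq_const_of_skew (hB : Function.Injective B) (hs : IsOpen s)
    (hf : ∀ x ∈ s, HasFDerivAt f (f' x) x) (hskew : ∀ x ∈ s, ∀ v, B (f' x v) v = 0)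
    {x : E} (hx : x ∈ s) : f' =ᶠ[𝓝 x] fun _ => f' x := by
  obtain ⟨r, hr, hball⟩ := Metric.isOpen_iff.mp hs x hx
  have hfb : ∀ z ∈ Metric.ball x r, HasFDerivAt f (f' z) z := fun z hz => hf z (hball hz)
  have hskewb : ∀ z ∈ Metric.ball x r, ∀ v, B (f' z v) v = 0 := fun z hz => hskew z (hball hz)
  filter_upwards [Metric.isOpen_ball.mem_nhds (Metric.mem_ball_self hr)] with z hz
  have hlin : HasFDerivAt (fun u => f x + f' x (u - x)) (f' x) z := by
    simpa using ((f' x).hasFDerivAt.comp z ((hasFDerivAt_id z).sub_const x)).const_add (f x)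
  have haffine : HasFDerivAt f (f' x) z :=
    hlin.congr_of_eventuallyEq <|
      eventually_of_mem (Metric.isOpen_ball.mem_nhds hz) fun u hu =>
        eq_add_apply_sub_of_skew B hB (convex_ball x r) Metric.isOpen_ball hfb hskewb hu
          (Metric.mem_ball_self hr)
  exact (hfb z hz).unique haffine

theorem exists_eq_apply_add_of_skew (hB : Function.Injective B) (hs : IsOpen s)
    (hs' : IsPreconnected s) (hf : ∀ x ∈ s, HasFDerivAt f (f' x) x)
    (hskew : ∀ x ∈ s, ∀ v, B (f' x v) v = 0) {x₀ : E} (hx₀ : x₀ ∈ s) :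
    ∃ b, ∀ x ∈ s, f x = f' x₀ x + b := by
  have hf'_zero : ∀ x ∈ s, HasFDerivAt f' (0 : E →L[ℝ] E →L[ℝ] E) x := fun x hx =>
    (hasFDerivAt_const (f' x) x).congr_of_eventuallyEq
      (eventuallyEq_const_of_skew B hB hs hf hskew hx)
  have hf'_const : ∀ x ∈ s, f' x = f' x₀ := fun x hx =>
    hs.is_const_of_fderiv_eq_zero hs'
      (fun z hz => (hf'_zero z hz).differentiableAt.differentiableWithinAt)
      (fun z hz => (hf'_zero z hz).fderiv) hx hx₀
  exact hs.exists_eq_add_of_fderiv_eq hs'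
    (fun x hx => (hf x hx).differentiableAt.differentiableWithinAt) (f' x₀).differentiableOn
    fun x hx => by rw [(hf x hx).fderiv, hf'_const x hx, ContinuousLinearMap.fderiv]

end SkewDerivative

open Matrix

theorem Matrix.mulVec_dotProduct_self_eq_zero {ι R : Type*} [Fintype ι] [CommRing R]
    [IsAddTorsionFree R] {A : Matrix ι ι R} (hA : Aᵀ = -A) (v : ι → R) : A *ᵥ v ⬝ᵥ v = 0 := by
  rw [← self_eq_neg]
  calc A *ᵥ v ⬝ᵥ v = Aᵀ *ᵥ v ⬝ᵥ v := by
        rw [mulVec_transpose, dotProduct_comm, dotProduct_mulVec]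
    _ = -(A *ᵥ v ⬝ᵥ v) := by rw [hA, neg_mulVec, neg_dotProduct]

def dotProductCLM (ι : Type*) [Fintype ι] : (ι → ℝ) →L[ℝ] (ι → ℝ) →L[ℝ] ℝ :=
  LinearMap.toContinuousLinearMap
    (LinearMap.toContinuousLinearMap.toLinearMap ∘ₗ dotProductBilin ℝ ℝ)

theorem dotProductCLM_apply {ι : Type*} [Fintype ι] (u v : ι → ℝ) :
    dotProductCLM ι u v = u ⬝ᵥ v := rfl

theorem dotProductCLM_injective (ι : Type*) [Fintype ι] : Function.Injective (dotProductCLM ι) := by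
  classical
  refine (injective_iff_map_eq_zero _).2 fun u hu => funext fun i => ?_
  simpa [dotProductCLM_apply] using congrArg (fun L => L (Pi.single i 1)) hu

def jacobianMatrix {d : ℕ} (w : (Fin d → ℝ) → Fin d → ℝ) (x : Fin d → ℝ) :
    Matrix (Fin d) (Fin d) ℝ :=
  Matrix.of fun i j => pd j (fun y => w y i) x

theorem fderiv_apply_eq_jacobianMatrix_mulVec {d : ℕ} {w : (Fin d → ℝ) → Fin d → ℝ}
    {x : Fin d → ℝ} (hw : DifferentiableAt ℝ w x) (v : Fin d → ℝ) :
    fderiv ℝ w x v = jacobianMatrix w x *ᵥ v := by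
  rw [← ContinuousLinearMap.coe_coe, ← LinearMap.toMatrix'_mulVec]
  congr 1
  ext i j
  simp [LinearMap.toMatrix'_apply, jacobianMatrix, pd, fderiv_apply hw]

theorem jacobianMatrix_transpose_eq_neg {d : ℕ} {w : (Fin d → ℝ) → Fin d → ℝ} {x : Fin d → ℝ}
    (h : ∀ i j, pd j (fun y => w y i) x + pd i (fun y => w y j) x = 0) :
    (jacobianMatrix w x)ᵀ = -jacobianMatrix w x := by
  ext i j
  simpa [jacobianMatrix, eq_neg_iff_add_eq_zero, add_comm] using h i j

/-- Kernel of the symmetrized derivative: a `C¹` vector field with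
`½(∇w + ∇wᵀ) = 0` on a nonempty connected open set is a rigid displacement
`w(x) = A x + b` with `A` skew-symmetric. -/
theorem rigid_displacement_kernel {d : ℕ} (Ω : Set (Fin d → ℝ))
    (hΩo : IsOpen Ω) (hΩc : IsConnected Ω)
    (w : (Fin d → ℝ) → Fin d → ℝ) (hw : ContDiffOn ℝ 1 w Ω)
    (hsym : ∀ x ∈ Ω, ∀ i j, pd j (fun y => w y i) x + pd i (fun y => w y j) x = 0) :
    ∃ (A : Matrix (Fin d) (Fin d) ℝ) (b : Fin d → ℝ), A.transpose = -A ∧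
      ∀ x ∈ Ω, w x = A.mulVec x + b := by
  obtain ⟨x₀, hx₀⟩ := hΩc.nonempty
  have hdiff : ∀ x ∈ Ω, DifferentiableAt ℝ w x := fun x hx =>
    (hw.contDiffAt (hΩo.mem_nhds hx)).differentiableAt one_ne_zero
  have hskew : ∀ x ∈ Ω, ∀ v, dotProductCLM (Fin d) (fderiv ℝ w x v) v = 0 := fun x hx v => by
    rw [dotProductCLM_apply, fderiv_apply_eq_jacobianMatrix_mulVec (hdiff x hx)]
    exact mulVec_dotProduct_self_eq_zero (jacobianMatrix_transpose_eq_neg (hsym x hx)) v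
  obtain ⟨b, hb⟩ := exists_eq_apply_add_of_skew (dotProductCLM (Fin d))
    (dotProductCLM_injective (Fin d)) hΩo hΩc.isPreconnected
    (fun x hx => (hdiff x hx).hasFDerivAt) hskew hx₀
  refine ⟨jacobianMatrix w x₀, b, jacobianMatrix_transpose_eq_neg (hsym x₀ hx₀), fun x hx => ?_⟩
  rw [hb x hx, fderiv_apply_eq_jacobianMatrix_mulVec (hdiff x₀ hx₀)]

end
end
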